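/- arXiv:1105.3705 — 2 statements merged into one kernel-verified Lean document; each statement's English description precedes it below -/
import Mathlib

section
/- For every n ≥ 2 and all indices i₁, i₂, i₃, i₄ ∈ {1,…,n}, the full antisymmetrization of the matrix product of two basis elements vanishes: Σ_{σ ∈ S₄} sgn(σ) · τ_{i_{σ(1)} i_{σ(2)}} · τ_{i_{σ(3)} i_{σ(4)}} = 0 (as an identity of n×n real matrices). In other words, the defining (vector) representation of so(n) satisfies the simplicity condition τ_{[IJ} τ_{KL]} = 0. -/
/-- The standard basis `τ_{IJ}` of the Lie algebra `so(n)` of antisymmetric `n×n` real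
matrices: `(τ_{IJ})_{KL} = ½ (δ_{IK} δ_{JL} − δ_{JK} δ_{IL})`. -/
noncomputable def tau (n : ℕ) (I J : Fin n) : Matrix (Fin n) (Fin n) ℝ :=
  Matrix.of fun K L =>
    (1 / 2 : ℝ) * ((if I = K then (1 : ℝ) else 0) * (if J = L then (1 : ℝ) else 0)
      - (if J = K then (1 : ℝ) else 0) * (if I = L then (1 : ℝ) else 0))

lemma delta_sum (n : ℕ) (a b : Fin n) (x y : ℝ) :
    ∑ m : Fin n, (if a = m then x else 0) * (if b = m then y else 0)
      = if a = b then x * y else 0 := by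
  simp [ite_mul, zero_mul, Finset.sum_ite_eq]

set_option maxHeartbeats 2000000 in
lemma tau_mul (n : ℕ) (I J M N : Fin n) :
    tau n I J * tau n M N = (1/4 : ℝ) •
      ((if J = M then (1:ℝ) else 0) • Matrix.single I N (1:ℝ)
       - (if J = N then (1:ℝ) else 0) • Matrix.single I M 1
       - (if I = M then (1:ℝ) else 0) • Matrix.single J N 1
       + (if I = N then (1:ℝ) else 0) • Matrix.single J M 1) := by
  ext K L
  simp only [tau, Matrix.mul_apply, Matrix.of_apply, Matrix.smul_apply, Matrix.add_apply,
    Matrix.sub_apply, Matrix.single, smul_eq_mul]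
  have step : (∑ m : Fin n,
      (1 / 2 : ℝ) * ((if I = K then (1 : ℝ) else 0) * (if J = m then (1 : ℝ) else 0)
        - (if J = K then (1 : ℝ) else 0) * (if I = m then (1 : ℝ) else 0)) *
      ((1 / 2 : ℝ) * ((if M = m then (1 : ℝ) else 0) * (if N = L then (1 : ℝ) else 0)
        - (if N = m then (1 : ℝ) else 0) * (if M = L then (1 : ℝ) else 0))))
      = (∑ m : Fin n,
        (((1/4 : ℝ) * (if I = K then (1:ℝ) else 0) * (if N = L then (1:ℝ) else 0)) *
          ((if J = m then (1:ℝ) else 0) * (if M = m then (1:ℝ) else 0))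
        - ((1/4 : ℝ) * (if I = K then (1:ℝ) else 0) * (if M = L then (1:ℝ) else 0)) *
          ((if J = m then (1:ℝ) else 0) * (if N = m then (1:ℝ) else 0))
        - ((1/4 : ℝ) * (if J = K then (1:ℝ) else 0) * (if N = L then (1:ℝ) else 0)) *
          ((if I = m then (1:ℝ) else 0) * (if M = m then (1:ℝ) else 0))
        + ((1/4 : ℝ) * (if J = K then (1:ℝ) else 0) * (if M = L then (1:ℝ) else 0)) *
          ((if I = m then (1:ℝ) else 0) * (if N = m then (1:ℝ) else 0)))) :=
    Finset.sum_congr rfl (fun m _ => by ring)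
  rw [step]
  simp only [Finset.sum_add_distrib, Finset.sum_sub_distrib, ← Finset.mul_sum, delta_sum]
  have hsplit : ∀ (p q : Prop) [Decidable p] [Decidable q],
      (if p ∧ q then (1:ℝ) else 0) = (if p then 1 else 0) * (if q then 1 else 0) := by
    intro p q _ _
    split_ifs <;> simp_all
  simp only [mul_one, hsplit]
  ring

lemma sum_sign_smul_eq_zero {M : Type*} [AddCommGroup M] [Module ℝ M]
    (g : Equiv.Perm (Fin 4) → M) (a b : Fin 4) (hab : a ≠ b)
    (hg : ∀ σ : Equiv.Perm (Fin 4), g (σ * Equiv.swap a b) = g σ) :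
    ∑ σ : Equiv.Perm (Fin 4), (Equiv.Perm.sign σ : ℤ) • g σ = 0 := by
  have h : (∑ σ : Equiv.Perm (Fin 4), (Equiv.Perm.sign σ : ℤ) • g σ)
      = -∑ σ : Equiv.Perm (Fin 4), (Equiv.Perm.sign σ : ℤ) • g σ := by
    rw [← Finset.sum_neg_distrib]
    exact Fintype.sum_equiv (Equiv.mulRight (Equiv.swap a b)) _ _ (fun σ => by
      simp [hg, Equiv.Perm.sign_swap hab])
  have h2 : (2 : ℝ) • (∑ σ : Equiv.Perm (Fin 4), (Equiv.Perm.sign σ : ℤ) • g σ) = 0 := by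
    rw [two_smul]
    nth_rewrite 2 [h]
    simp
  simpa using (smul_eq_zero.mp h2).resolve_left (by norm_num)

/-- For every `n ≥ 2` and all indices `i₁, i₂, i₃, i₄ ∈ {1,…,n}`, the full
antisymmetrization of the matrix product of two `so(n)` basis elements vanishes:
`Σ_{σ ∈ S₄} sgn(σ) · τ_{i_{σ(1)} i_{σ(2)}} · τ_{i_{σ(3)} i_{σ(4)}} = 0`, i.e. the
defining representation of `so(n)` satisfies the simplicity condition
`τ_{[IJ} τ_{KL]} = 0`. -/
theorem tau_simplicity (n : ℕ) (hn : 2 ≤ n) (i : Fin 4 → Fin n) :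
    ∑ σ : Equiv.Perm (Fin 4),
      (Equiv.Perm.sign σ : ℤ) •
        (tau n (i (σ 0)) (i (σ 1)) * tau n (i (σ 2)) (i (σ 3))) = 0 := by
  have expand : ∀ σ : Equiv.Perm (Fin 4),
      (Equiv.Perm.sign σ : ℤ) • (tau n (i (σ 0)) (i (σ 1)) * tau n (i (σ 2)) (i (σ 3)))
      = (1/4 : ℝ) •
        ((Equiv.Perm.sign σ : ℤ) • ((if i (σ 1) = i (σ 2) then (1:ℝ) else 0) •
            Matrix.single (i (σ 0)) (i (σ 3)) (1:ℝ))
         - (Equiv.Perm.sign σ : ℤ) • ((if i (σ 1) = i (σ 3) then (1:ℝ) else 0) •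
            Matrix.single (i (σ 0)) (i (σ 2)) (1:ℝ))
         - (Equiv.Perm.sign σ : ℤ) • ((if i (σ 0) = i (σ 2) then (1:ℝ) else 0) •
            Matrix.single (i (σ 1)) (i (σ 3)) (1:ℝ))
         + (Equiv.Perm.sign σ : ℤ) • ((if i (σ 0) = i (σ 3) then (1:ℝ) else 0) •
            Matrix.single (i (σ 1)) (i (σ 2)) (1:ℝ))) := by
    intro σ
    rw [tau_mul, smul_comm]
    simp only [smul_sub, smul_add]
  rw [Finset.sum_congr rfl (fun σ _ => expand σ), ← Finset.smul_sum,
    Finset.sum_add_distrib, Finset.sum_sub_distrib, Finset.sum_sub_distrib]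
  have hA : ∑ σ : Equiv.Perm (Fin 4), (Equiv.Perm.sign σ : ℤ) •
      ((if i (σ 1) = i (σ 2) then (1:ℝ) else 0) •
        Matrix.single (i (σ 0)) (i (σ 3)) (1:ℝ)) = 0 := by
    apply sum_sign_smul_eq_zero _ 1 2 (by decide)
    intro σ
    have e0 : (Equiv.swap (1:Fin 4) 2) 0 = 0 := by decide
    have e1 : (Equiv.swap (1:Fin 4) 2) 1 = 2 := by decide
    have e2 : (Equiv.swap (1:Fin 4) 2) 2 = 1 := by decide
    have e3 : (Equiv.swap (1:Fin 4) 2) 3 = 3 := by decide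
    simp only [Equiv.Perm.mul_apply, e0, e1, e2, e3, eq_comm]
  have hB : ∑ σ : Equiv.Perm (Fin 4), (Equiv.Perm.sign σ : ℤ) •
      ((if i (σ 1) = i (σ 3) then (1:ℝ) else 0) •
        Matrix.single (i (σ 0)) (i (σ 2)) (1:ℝ)) = 0 := by
    apply sum_sign_smul_eq_zero _ 1 3 (by decide)
    intro σ
    have e0 : (Equiv.swap (1:Fin 4) 3) 0 = 0 := by decide
    have e1 : (Equiv.swap (1:Fin 4) 3) 1 = 3 := by decide
    have e2 : (Equiv.swap (1:Fin 4) 3) 2 = 2 := by decide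
    have e3 : (Equiv.swap (1:Fin 4) 3) 3 = 1 := by decide
    simp only [Equiv.Perm.mul_apply, e0, e1, e2, e3, eq_comm]
  have hC : ∑ σ : Equiv.Perm (Fin 4), (Equiv.Perm.sign σ : ℤ) •
      ((if i (σ 0) = i (σ 2) then (1:ℝ) else 0) •
        Matrix.single (i (σ 1)) (i (σ 3)) (1:ℝ)) = 0 := by
    apply sum_sign_smul_eq_zero _ 0 2 (by decide)
    intro σ
    have e0 : (Equiv.swap (0:Fin 4) 2) 0 = 2 := by decide
    have e1 : (Equiv.swap (0:Fin 4) 2) 1 = 1 := by decide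
    have e2 : (Equiv.swap (0:Fin 4) 2) 2 = 0 := by decide
    have e3 : (Equiv.swap (0:Fin 4) 2) 3 = 3 := by decide
    simp only [Equiv.Perm.mul_apply, e0, e1, e2, e3, eq_comm]
  have hD : ∑ σ : Equiv.Perm (Fin 4), (Equiv.Perm.sign σ : ℤ) •
      ((if i (σ 0) = i (σ 3) then (1:ℝ) else 0) •
        Matrix.single (i (σ 1)) (i (σ 2)) (1:ℝ)) = 0 := by
    apply sum_sign_smul_eq_zero _ 0 3 (by decide)
    intro σ
    have e0 : (Equiv.swap (0:Fin 4) 3) 0 = 3 := by decide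
    have e1 : (Equiv.swap (0:Fin 4) 3) 1 = 1 := by decide
    have e2 : (Equiv.swap (0:Fin 4) 3) 2 = 2 := by decide
    have e3 : (Equiv.swap (0:Fin 4) 3) 3 = 0 := by decide
    simp only [Equiv.Perm.mul_apply, e0, e1, e2, e3, eq_comm]
  rw [hA, hB, hC, hD]
  simp
end

section
/- Let A be an associative ℝ-algebra, let D ≥ 3 and n := D+1, and let X : {1,…,n} × {1,…,n} → A be a family with X_{JI} = −X_{IJ} satisfying the so(n) commutation relations [X_{IJ}, X_{KL}] = ½ (δ_{JK} X_{IL} + δ_{IL} X_{JK} − δ_{IK} X_{JL} − δ_{JL} X_{IK}). Let Λ ∈ M_n(ℝ) be antisymmetric and fix indices M₁,…,M_{D−3} ∈ {1,…,n}. Then [ Σ_{A,B=1}^{n} Λ_{AB} X_{AB} , Σ_{I,J,K,L=1}^{n} ε_{I J K L M₁ … M_{D−3}} X_{IJ} X_{KL} ] = Σ_{i=1}^{D−3} Σ_{A=1}^{n} Λ_{A M_i} Σ_{I,J,K,L=1}^{n} ε_{I J K L M₁ … M_{i−1} A M_{i+1} … M_{D−3}} X_{IJ} X_{KL}; i.e.,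 the commutator of the Gauß generator with the quadratic simplicity expression equals the simplicity expression with an infinitesimal rotation by Λ acting on the multi-index (M₁,…,M_{D−3}). -/
/-- The Levi-Civita symbol `ε_{f(1) … f(n)}` on `n` indices: the sign of the permutation
`(f(1),…,f(n))` of `(1,…,n)`, and `0` if any two indices coincide. -/
noncomputable def eps {n : ℕ} (f : Fin n → Fin n) : ℤ :=
  if h : Function.Bijective f then (Equiv.Perm.sign (Equiv.ofBijective f h) : ℤ) else 0

/-- The combined index tuple `(I, J, K, L, M₁, …, M_d)` (with `n = d + 4` total slots). -/
def idx {d : ℕ} (I J K L : Fin (d + 4)) (M : Fin d → Fin (d + 4)) :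
    Fin (d + 4) → Fin (d + 4) := fun i =>
  if h : (i : ℕ) < 4 then ![I, J, K, L] ⟨(i : ℕ), h⟩
  else M ⟨(i : ℕ) - 4, by have := i.isLt; omega⟩



lemma eps_of_not_bijective {n : ℕ} {f : Fin n → Fin n} (h : ¬ Function.Bijective f) :
    eps f = 0 := dif_neg h

lemma eps_comp_perm {n : ℕ} (f : Fin n → Fin n) (σ : Equiv.Perm (Fin n)) :
    eps (f ∘ σ) = (Equiv.Perm.sign σ : ℤ) * eps f := by
  by_cases h : Function.Bijective f
  · have h2 : Function.Bijective (f ∘ σ) := h.comp σ.bijective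
    rw [eps, eps, dif_pos h2, dif_pos h]
    have he : Equiv.ofBijective (f ∘ σ) h2 = (Equiv.ofBijective f h) * σ := by
      apply Equiv.ext; intro x; rfl
    rw [he, map_mul]
    push_cast
    ring
  · have h2 : ¬ Function.Bijective (f ∘ σ) := by
      intro hb
      apply h
      have hf : f = (f ∘ σ) ∘ σ.symm := by funext x; simp
      rw [hf]
      exact hb.comp σ.symm.bijective
    rw [eps, eps, dif_neg h2, dif_neg h, mul_zero]

lemma eps_rot {n : ℕ} (Λ : Matrix (Fin n) (Fin n) ℝ) (hΛ : ∀ a b, Λ b a = - Λ a b)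
    (f : Fin n → Fin n) :
    ∑ s : Fin n, ∑ B : Fin n, Λ B (f s) * (eps (Function.update f s B) : ℝ) = 0 := by
  have hΛ0 : ∀ a, Λ a a = 0 := fun a => by have := hΛ a a; linarith
  by_cases hf : Function.Injective f
  · have hbij : Function.Bijective f := Finite.injective_iff_bijective.mp hf
    apply Finset.sum_eq_zero; intro s _
    apply Finset.sum_eq_zero; intro B _
    by_cases hB : B = f s
    · subst hB; rw [hΛ0, zero_mul]
    · have hnb : ¬ Function.Bijective (Function.update f s B) := by
        intro hb
        obtain ⟨t, ht⟩ := hb.surjective (f s)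
        by_cases hts : t = s
        · subst hts; rw [Function.update_self] at ht; exact hB ht
        · rw [Function.update_of_ne hts] at ht
          exact hts (hf ht)
      rw [eps_of_not_bijective hnb]
      simp
  · obtain ⟨s₁, s₂, hval, hne⟩ := Function.not_injective_iff.mp hf
    have key : ∀ B, (eps (Function.update f s₁ B) : ℝ) = - eps (Function.update f s₂ B) := by
      intro B
      have hcomp : Function.update f s₁ B = (Function.update f s₂ B) ∘ (Equiv.swap s₁ s₂) := by
        funext x
        show Function.update f s₁ B x = Function.update f s₂ B ((Equiv.swap s₁ s₂) x)
        by_cases h1 : x = s₁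
        · subst h1
          rw [Equiv.swap_apply_left, Function.update_self, Function.update_self]
        · by_cases h2 : x = s₂
          · subst h2
            rw [Equiv.swap_apply_right, Function.update_of_ne hne.symm,
              Function.update_of_ne hne, hval]
          · rw [Equiv.swap_apply_of_ne_of_ne h1 h2, Function.update_of_ne h1,
              Function.update_of_ne h2]
      rw [hcomp, eps_comp_perm, Equiv.Perm.sign_swap hne]
      push_cast; ring
    have hzero : ∀ s, s ≠ s₁ → s ≠ s₂ → ∀ B, eps (Function.update f s B) = 0 := by
      intro s h1 h2 B
      apply eps_of_not_bijective
      intro hb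
      apply hne
      apply hb.injective
      rw [Function.update_of_ne h1.symm, Function.update_of_ne h2.symm]
      exact hval
    rw [← Finset.sum_subset (Finset.subset_univ ({s₁, s₂} : Finset (Fin n)))
      (fun s _ hs => ?_)]
    · rw [Finset.sum_pair hne, ← Finset.sum_add_distrib]
      apply Finset.sum_eq_zero; intro B _
      rw [key B, hval]; ring
    · simp only [Finset.mem_insert, Finset.mem_singleton, not_or] at hs
      apply Finset.sum_eq_zero; intro B _
      rw [hzero s hs.1 hs.2 B]
      simp

section Idx
variable {d : ℕ} (I J K L B : Fin (d + 4)) (M : Fin d → Fin (d + 4))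

lemma fin4 (k : ℕ) (h : k < 4) : (⟨k, by omega⟩ : Fin (d + 4)) = ⟨k, by omega⟩ := rfl

lemma idx_upd0 :
    Function.update (idx I J K L M) (⟨0, by omega⟩ : Fin (d+4)) B = idx B J K L M := by
  funext s
  rcases s with ⟨v, hv⟩
  rw [Function.update_apply]
  by_cases h : v = 0
  · subst h; rw [if_pos rfl]; rfl
  · rw [if_neg (by simp [Fin.ext_iff, h])]
    show idx I J K L M ⟨v, hv⟩ = idx B J K L M ⟨v, hv⟩
    unfold idx
    by_cases h4 : v < 4
    · rw [dif_pos h4, dif_pos h4]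
      interval_cases v
      · omega
      · rfl
      · rfl
      · rfl
    · rw [dif_neg h4, dif_neg h4]

lemma idx_upd1 :
    Function.update (idx I J K L M) (⟨1, by omega⟩ : Fin (d+4)) B = idx I B K L M := by
  funext s
  rcases s with ⟨v, hv⟩
  rw [Function.update_apply]
  by_cases h : v = 1
  · subst h; rw [if_pos rfl]; rfl
  · rw [if_neg (by simp [Fin.ext_iff, h])]
    show idx I J K L M ⟨v, hv⟩ = idx I B K L M ⟨v, hv⟩
    unfold idx
    by_cases h4 : v < 4
    · rw [dif_pos h4, dif_pos h4]
      interval_cases v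
      · rfl
      · omega
      · rfl
      · rfl
    · rw [dif_neg h4, dif_neg h4]

lemma idx_upd2 :
    Function.update (idx I J K L M) (⟨2, by omega⟩ : Fin (d+4)) B = idx I J B L M := by
  funext s
  rcases s with ⟨v, hv⟩
  rw [Function.update_apply]
  by_cases h : v = 2
  · subst h; rw [if_pos rfl]; rfl
  · rw [if_neg (by simp [Fin.ext_iff, h])]
    show idx I J K L M ⟨v, hv⟩ = idx I J B L M ⟨v, hv⟩
    unfold idx
    by_cases h4 : v < 4
    · rw [dif_pos h4, dif_pos h4]
      interval_cases v
      · rfl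
      · rfl
      · omega
      · rfl
    · rw [dif_neg h4, dif_neg h4]

lemma idx_upd3 :
    Function.update (idx I J K L M) (⟨3, by omega⟩ : Fin (d+4)) B = idx I J K B M := by
  funext s
  rcases s with ⟨v, hv⟩
  rw [Function.update_apply]
  by_cases h : v = 3
  · subst h; rw [if_pos rfl]; rfl
  · rw [if_neg (by simp [Fin.ext_iff, h])]
    show idx I J K L M ⟨v, hv⟩ = idx I J K B M ⟨v, hv⟩
    unfold idx
    by_cases h4 : v < 4
    · rw [dif_pos h4, dif_pos h4]
      interval_cases v
      · rfl
      · rfl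
      · rfl
      · omega
    · rw [dif_neg h4, dif_neg h4]

lemma idx_upd_tail (i : Fin d) :
    Function.update (idx I J K L M) (⟨(i : ℕ) + 4, by omega⟩ : Fin (d+4)) B
      = idx I J K L (Function.update M i B) := by
  funext s
  rcases s with ⟨v, hv⟩
  rw [Function.update_apply]
  by_cases h : v = (i : ℕ) + 4
  · subst h
    rw [if_pos rfl]
    show _ = idx I J K L (Function.update M i B) ⟨(i:ℕ)+4, hv⟩
    unfold idx
    rw [dif_neg (show ¬((i:ℕ)+4 < 4) by omega)]
    have hh : (⟨((⟨(i:ℕ)+4, hv⟩ : Fin (d+4)) : ℕ) - 4, by omega⟩ : Fin d) = i := by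
      exact Fin.ext (by simp)
    rw [hh, Function.update_self]
  · rw [if_neg (by simp [Fin.ext_iff, h])]
    show idx I J K L M ⟨v, hv⟩ = idx I J K L (Function.update M i B) ⟨v, hv⟩
    unfold idx
    by_cases h4 : v < 4
    · rw [dif_pos h4, dif_pos h4]
    · rw [dif_neg h4, dif_neg h4]
      rw [Function.update_of_ne (by simp [Fin.ext_iff]; omega)]

lemma idx_at0 : idx I J K L M ⟨0, by omega⟩ = I := rfl
lemma idx_at1 : idx I J K L M ⟨1, by omega⟩ = J := rfl
lemma idx_at2 : idx I J K L M ⟨2, by omega⟩ = K := rfl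
lemma idx_at3 : idx I J K L M ⟨3, by omega⟩ = L := rfl
lemma idx_at_tail (i : Fin d) : idx I J K L M ⟨(i : ℕ) + 4, by omega⟩ = M i := by
  unfold idx
  rw [dif_neg (show ¬((i:ℕ)+4 < 4) by omega)]
  congr 1

lemma fin_sum_split {Mo : Type*} [AddCommMonoid Mo] (g : Fin (d + 4) → Mo) :
    ∑ s : Fin (d + 4), g s
      = g ⟨0, by omega⟩ + g ⟨1, by omega⟩ + g ⟨2, by omega⟩ + g ⟨3, by omega⟩
        + ∑ i : Fin d, g ⟨(i : ℕ) + 4, by omega⟩ := by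
  rw [Fin.sum_univ_succ, Fin.sum_univ_succ, Fin.sum_univ_succ, Fin.sum_univ_succ]
  have e0 : (0 : Fin (d+4)) = (⟨0, by omega⟩ : Fin (d+4)) := rfl
  have e1 : Fin.succ (0 : Fin (d+3)) = (⟨1, by omega⟩ : Fin (d+4)) := by
    simp [Fin.ext_iff]
  have e2 : Fin.succ (Fin.succ (0 : Fin (d+2))) = (⟨2, by omega⟩ : Fin (d+4)) := by
    simp [Fin.ext_iff]
  have e3 : Fin.succ (Fin.succ (Fin.succ (0 : Fin (d+1)))) = (⟨3, by omega⟩ : Fin (d+4)) := by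
    simp [Fin.ext_iff]
  have et : ∀ i : Fin d, Fin.succ (Fin.succ (Fin.succ (Fin.succ i))) = (⟨(i:ℕ)+4, by omega⟩ : Fin (d+4)) := by
    intro i; simp [Fin.ext_iff]
  simp only [e0, e1, e2, e3, et]
  abel

end Idx

section Sums

variable {α β Mo : Type*} [Fintype α] [Fintype β] [AddCommMonoid Mo]

lemma sum_push3 (v : β → α → α → Mo) :
    ∑ x : β, ∑ K : α, ∑ L : α, v x K L = ∑ K : α, ∑ L : α, ∑ x : β, v x K L := by
  rw [Finset.sum_comm]
  exact Finset.sum_congr rfl fun K _ => Finset.sum_comm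

lemma sum_push4 (v : β → α → α → α → Mo) :
    ∑ x : β, ∑ J : α, ∑ K : α, ∑ L : α, v x J K L
      = ∑ J : α, ∑ K : α, ∑ L : α, ∑ x : β, v x J K L := by
  rw [Finset.sum_comm]
  exact Finset.sum_congr rfl fun J _ => sum_push3 fun x K L => v x J K L

lemma sum_push5 (v : β → α → α → α → α → Mo) :
    ∑ x : β, ∑ I : α, ∑ J : α, ∑ K : α, ∑ L : α, v x I J K L
      = ∑ I : α, ∑ J : α, ∑ K : α, ∑ L : α, ∑ x : β, v x I J K L := by
  rw [Finset.sum_comm]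
  exact Finset.sum_congr rfl fun I _ => sum_push4 fun x J K L => v x I J K L

lemma swap12 (u : α → α → Mo) :
    ∑ L : α, ∑ a : α, u L a = ∑ L : α, ∑ a : α, u a L := Finset.sum_comm

lemma swap13 (u : α → α → α → Mo) :
    ∑ K : α, ∑ L : α, ∑ a : α, u K L a = ∑ K : α, ∑ L : α, ∑ a : α, u a L K :=
  calc ∑ K : α, ∑ L : α, ∑ a : α, u K L a
      = ∑ K : α, ∑ a : α, ∑ L : α, u K L a :=
        Finset.sum_congr rfl fun K _ => Finset.sum_comm
    _ = ∑ K : α, ∑ a : α, ∑ L : α, u a L K := Finset.sum_comm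
    _ = ∑ K : α, ∑ L : α, ∑ a : α, u a L K :=
        Finset.sum_congr rfl fun K _ => Finset.sum_comm

lemma swap14 (u : α → α → α → α → Mo) :
    ∑ J : α, ∑ K : α, ∑ L : α, ∑ a : α, u J K L a
      = ∑ J : α, ∑ K : α, ∑ L : α, ∑ a : α, u a K L J :=
  calc ∑ J : α, ∑ K : α, ∑ L : α, ∑ a : α, u J K L a
      = ∑ J : α, ∑ a : α, ∑ K : α, ∑ L : α, u J K L a :=
        Finset.sum_congr rfl fun J _ => (sum_push3 fun a K L => u J K L a).symm
    _ = ∑ J : α, ∑ a : α, ∑ K : α, ∑ L : α, u a K L J := Finset.sum_comm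
    _ = ∑ J : α, ∑ K : α, ∑ L : α, ∑ a : α, u a K L J :=
        Finset.sum_congr rfl fun J _ => sum_push3 fun a K L => u a K L J

lemma swap15 (t : α → α → α → α → α → Mo) :
    ∑ I : α, ∑ J : α, ∑ K : α, ∑ L : α, ∑ a : α, t I J K L a
      = ∑ I : α, ∑ J : α, ∑ K : α, ∑ L : α, ∑ a : α, t a J K L I :=
  calc ∑ I : α, ∑ J : α, ∑ K : α, ∑ L : α, ∑ a : α, t I J K L a
      = ∑ I : α, ∑ a : α, ∑ J : α, ∑ K : α, ∑ L : α, t I J K L a :=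
        Finset.sum_congr rfl fun I _ => (sum_push4 fun a J K L => t I J K L a).symm
    _ = ∑ I : α, ∑ a : α, ∑ J : α, ∑ K : α, ∑ L : α, t a J K L I := Finset.sum_comm
    _ = ∑ I : α, ∑ J : α, ∑ K : α, ∑ L : α, ∑ a : α, t a J K L I :=
        Finset.sum_congr rfl fun I _ => sum_push4 fun a J K L => t a J K L I

lemma swap25 (t : α → α → α → α → α → Mo) :
    ∑ I : α, ∑ J : α, ∑ K : α, ∑ L : α, ∑ a : α, t I J K L a
      = ∑ I : α, ∑ J : α, ∑ K : α, ∑ L : α, ∑ a : α, t I a K L J :=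
  Finset.sum_congr rfl fun I _ => swap14 fun J K L a => t I J K L a

lemma swap35 (t : α → α → α → α → α → Mo) :
    ∑ I : α, ∑ J : α, ∑ K : α, ∑ L : α, ∑ a : α, t I J K L a
      = ∑ I : α, ∑ J : α, ∑ K : α, ∑ L : α, ∑ a : α, t I J a L K :=
  Finset.sum_congr rfl fun I _ => Finset.sum_congr rfl fun J _ =>
    swap13 fun K L a => t I J K L a

lemma swap45 (t : α → α → α → α → α → Mo) :
    ∑ I : α, ∑ J : α, ∑ K : α, ∑ L : α, ∑ a : α, t I J K L a
      = ∑ I : α, ∑ J : α, ∑ K : α, ∑ L : α, ∑ a : α, t I J K a L :=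
  Finset.sum_congr rfl fun I _ => Finset.sum_congr rfl fun J _ =>
    Finset.sum_congr rfl fun K _ => swap12 fun L a => t I J K L a

end Sums

lemma hGX_lemma {A : Type*} [Ring A] [Algebra ℝ A] {n : ℕ}
    (X : Fin n → Fin n → A)
    (hso : ∀ I J K L, X I J * X K L - X K L * X I J =
      (1 / 2 : ℝ) •
        ((if J = K then (1 : ℝ) else 0) • X I L
          + (if I = L then (1 : ℝ) else 0) • X J K
          - (if I = K then (1 : ℝ) else 0) • X J L
          - (if J = L then (1 : ℝ) else 0) • X I K))
    (Λ : Matrix (Fin n) (Fin n) ℝ) (hΛ : ∀ a b, Λ b a = - Λ a b)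
    (I J : Fin n) :
    (∑ a : Fin n, ∑ b : Fin n, Λ a b • X a b) * X I J
      - X I J * (∑ a : Fin n, ∑ b : Fin n, Λ a b • X a b)
      = ∑ a : Fin n, (Λ a I • X a J - Λ a J • X a I) := by
  rw [Finset.sum_mul, Finset.mul_sum, ← Finset.sum_sub_distrib]
  have step1 : ∀ a : Fin n,
      (∑ b : Fin n, Λ a b • X a b) * X I J - X I J * (∑ b : Fin n, Λ a b • X a b)
        = ∑ b : Fin n, Λ a b • (X a b * X I J - X I J * X a b) := by
    intro a
    rw [Finset.sum_mul, Finset.mul_sum, ← Finset.sum_sub_distrib]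
    exact Finset.sum_congr rfl fun b _ => by
      rw [smul_mul_assoc, mul_smul_comm, smul_sub]
  simp only [step1, hso]
  have expand : ∀ a b : Fin n,
      Λ a b • (1 / 2 : ℝ) •
        ((if b = I then (1 : ℝ) else 0) • X a J
          + (if a = J then (1 : ℝ) else 0) • X b I
          - (if a = I then (1 : ℝ) else 0) • X b J
          - (if b = J then (1 : ℝ) else 0) • X a I)
      = ((if b = I then (Λ a b * (1/2 : ℝ)) • X a J else 0)
          + (if a = J then (Λ a b * (1/2 : ℝ)) • X b I else 0))
        - ((if a = I then (Λ a b * (1/2 : ℝ)) • X b J else 0)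
          + (if b = J then (Λ a b * (1/2 : ℝ)) • X a I else 0)) := by
    intro a b
    rw [smul_smul]
    split_ifs <;> simp [smul_add, smul_sub] <;> abel
  simp only [expand]
  simp only [Finset.sum_sub_distrib, Finset.sum_add_distrib, Finset.sum_ite_irrel,
    Finset.sum_const_zero, Finset.sum_ite_eq', Finset.mem_univ, if_true]
  have e2 : ∑ x : Fin n, (Λ J x * (1/2 : ℝ)) • X x I
      = ∑ x : Fin n, (-(Λ x J * (1/2 : ℝ))) • X x I :=
    Finset.sum_congr rfl fun x _ => by rw [hΛ x J, neg_mul]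
  have e3 : ∑ x : Fin n, (Λ I x * (1/2 : ℝ)) • X x J
      = ∑ x : Fin n, (-(Λ x I * (1/2 : ℝ))) • X x J :=
    Finset.sum_congr rfl fun x _ => by rw [hΛ x I, neg_mul]
  rw [e2, e3]
  simp only [neg_smul, Finset.sum_neg_distrib]
  have key1 : ∑ x : Fin n, (Λ x I * (1/2 : ℝ)) • X x J + ∑ x : Fin n, (Λ x I * (1/2 : ℝ)) • X x J
      = ∑ x : Fin n, Λ x I • X x J := by
    rw [← Finset.sum_add_distrib]
    exact Finset.sum_congr rfl fun x _ => by module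
  have key2 : ∑ x : Fin n, (Λ x J * (1/2 : ℝ)) • X x I + ∑ x : Fin n, (Λ x J * (1/2 : ℝ)) • X x I
      = ∑ x : Fin n, Λ x J • X x I := by
    rw [← Finset.sum_add_distrib]
    exact Finset.sum_congr rfl fun x _ => by module
  rw [← key1, ← key2]
  abel


/-- Let `A` be an associative ℝ-algebra, `D = d + 3 ≥ 3`, `n = D + 1 = d + 4`, and let
`X_{IJ}` be an antisymmetric family in `A` satisfying the `so(n)` commutation relations.
For an antisymmetric real matrix `Λ` and fixed indices `M₁,…,M_{D−3}`, the commutator of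
the Gauß generator `Σ Λ_{AB} X_{AB}` with the quadratic simplicity expression
`Σ ε_{IJKLM₁…M_{D−3}} X_{IJ} X_{KL}` equals the simplicity expression with an
infinitesimal rotation by `Λ` acting on the multi-index `(M₁,…,M_{D−3})`. -/
theorem gauss_commutator_simplicity
    {A : Type*} [Ring A] [Algebra ℝ A] (d : ℕ)
    (X : Fin (d + 4) → Fin (d + 4) → A)
    (hanti : ∀ I J, X J I = - X I J)
    (hso : ∀ I J K L, X I J * X K L - X K L * X I J =
      (1 / 2 : ℝ) •
        ((if J = K then (1 : ℝ) else 0) • X I L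
          + (if I = L then (1 : ℝ) else 0) • X J K
          - (if I = K then (1 : ℝ) else 0) • X J L
          - (if J = L then (1 : ℝ) else 0) • X I K))
    (Λ : Matrix (Fin (d + 4)) (Fin (d + 4)) ℝ) (hΛ : ∀ a b, Λ b a = - Λ a b)
    (M : Fin d → Fin (d + 4)) :
    (∑ a : Fin (d + 4), ∑ b : Fin (d + 4), Λ a b • X a b) *
        (∑ I : Fin (d + 4), ∑ J : Fin (d + 4), ∑ K : Fin (d + 4), ∑ L : Fin (d + 4),
          (eps (idx I J K L M) : ℝ) • (X I J * X K L))
      - (∑ I : Fin (d + 4), ∑ J : Fin (d + 4), ∑ K : Fin (d + 4), ∑ L : Fin (d + 4),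
          (eps (idx I J K L M) : ℝ) • (X I J * X K L)) *
        (∑ a : Fin (d + 4), ∑ b : Fin (d + 4), Λ a b • X a b)
      = ∑ i : Fin d, ∑ a : Fin (d + 4), Λ a (M i) •
          ∑ I : Fin (d + 4), ∑ J : Fin (d + 4), ∑ K : Fin (d + 4), ∑ L : Fin (d + 4),
            (eps (idx I J K L (Function.update M i a)) : ℝ) • (X I J * X K L) := by
  classical
  obtain ⟨G, hG⟩ : ∃ G : A,
      (∑ a : Fin (d + 4), ∑ b : Fin (d + 4), Λ a b • X a b) = G := ⟨_, rfl⟩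
  rw [hG]
  have hGXG : ∀ I J, G * X I J - X I J * G
      = ∑ a : Fin (d + 4), (Λ a I • X a J - Λ a J • X a I) := by
    intro I J
    rw [← hG]
    exact hGX_lemma X hso Λ hΛ I J
  have hg : ∀ I J K L : Fin (d + 4),
      (∑ B : Fin (d + 4), Λ B I * (eps (idx B J K L M) : ℝ))
      + (∑ B : Fin (d + 4), Λ B J * (eps (idx I B K L M) : ℝ))
      + (∑ B : Fin (d + 4), Λ B K * (eps (idx I J B L M) : ℝ))
      + (∑ B : Fin (d + 4), Λ B L * (eps (idx I J K B M) : ℝ))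
      + (∑ i : Fin d, ∑ B : Fin (d + 4),
          Λ B (M i) * (eps (idx I J K L (Function.update M i B)) : ℝ)) = 0 := by
    intro I J K L
    have h := eps_rot Λ hΛ (idx I J K L M)
    rw [fin_sum_split (fun s => ∑ B : Fin (d + 4),
      Λ B (idx I J K L M s) * (eps (Function.update (idx I J K L M) s B) : ℝ))] at h
    simp only [idx_at0, idx_at1, idx_at2, idx_at3, idx_at_tail, idx_upd0, idx_upd1, idx_upd2,
      idx_upd3, idx_upd_tail] at h
    exact h
  have hPmerge : ∀ (c1 c2 c3 c4 w : ℝ) (p : A), c1 + c2 + c3 + c4 + w = 0 →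
      ((-c1) • p - c2 • p) + ((-c3) • p - c4 • p) = w • p := by
    intro c1 c2 c3 c4 w p hsum
    have hw : w = -(c1 + c2 + c3 + c4) := by linarith
    rw [hw]
    module
  have stepA : G * (∑ I : Fin (d + 4), ∑ J : Fin (d + 4), ∑ K : Fin (d + 4), ∑ L : Fin (d + 4),
          (eps (idx I J K L M) : ℝ) • (X I J * X K L))
      - (∑ I : Fin (d + 4), ∑ J : Fin (d + 4), ∑ K : Fin (d + 4), ∑ L : Fin (d + 4),
          (eps (idx I J K L M) : ℝ) • (X I J * X K L)) * G
      = ∑ I : Fin (d + 4), ∑ J : Fin (d + 4), ∑ K : Fin (d + 4), ∑ L : Fin (d + 4),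
          (eps (idx I J K L M) : ℝ) •
            ((G * X I J - X I J * G) * X K L + X I J * (G * X K L - X K L * G)) := by
    rw [Finset.mul_sum, Finset.sum_mul, ← Finset.sum_sub_distrib]
    refine Finset.sum_congr rfl fun I _ => ?_
    rw [Finset.mul_sum, Finset.sum_mul, ← Finset.sum_sub_distrib]
    refine Finset.sum_congr rfl fun J _ => ?_
    rw [Finset.mul_sum, Finset.sum_mul, ← Finset.sum_sub_distrib]
    refine Finset.sum_congr rfl fun K _ => ?_
    rw [Finset.mul_sum, Finset.sum_mul, ← Finset.sum_sub_distrib]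
    refine Finset.sum_congr rfl fun L _ => ?_
    rw [mul_smul_comm, smul_mul_assoc, ← smul_sub]
    congr 1
    noncomm_ring
  rw [stepA]
  simp only [hGXG]
  have stepB : ∀ I J K L : Fin (d + 4),
      (eps (idx I J K L M) : ℝ) •
        ((∑ a : Fin (d + 4), (Λ a I • X a J - Λ a J • X a I)) * X K L
          + X I J * (∑ a : Fin (d + 4), (Λ a K • X a L - Λ a L • X a K)))
      = ∑ a : Fin (d + 4),
          (((eps (idx I J K L M) : ℝ) * Λ a I) • (X a J * X K L)
          - ((eps (idx I J K L M) : ℝ) * Λ a J) • (X a I * X K L)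
          + (((eps (idx I J K L M) : ℝ) * Λ a K) • (X I J * X a L)
            - ((eps (idx I J K L M) : ℝ) * Λ a L) • (X I J * X a K))) := by
    intro I J K L
    rw [Finset.sum_mul, Finset.mul_sum, ← Finset.sum_add_distrib, Finset.smul_sum]
    refine Finset.sum_congr rfl fun a _ => ?_
    rw [sub_mul, mul_sub, smul_mul_assoc, smul_mul_assoc, mul_smul_comm, mul_smul_comm]
    module
  simp only [stepB]
  simp only [Finset.sum_sub_distrib, Finset.sum_add_distrib]
  rw [swap15 (fun I J K L a => ((eps (idx I J K L M) : ℝ) * Λ a I) • (X a J * X K L)),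
    swap25 (fun I J K L a => ((eps (idx I J K L M) : ℝ) * Λ a J) • (X a I * X K L)),
    swap35 (fun I J K L a => ((eps (idx I J K L M) : ℝ) * Λ a K) • (X I J * X a L)),
    swap45 (fun I J K L a => ((eps (idx I J K L M) : ℝ) * Λ a L) • (X I J * X a K))]
  have r1 : ∀ I J K L a : Fin (d + 4),
      ((eps (idx a J K L M) : ℝ) * Λ I a) • (X I J * X K L)
        = -((Λ a I * (eps (idx a J K L M) : ℝ)) • (X I J * X K L)) := by
    intro I J K L a; rw [hΛ a I]; module
  have r2 : ∀ I J K L a : Fin (d + 4),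
      ((eps (idx I a K L M) : ℝ) * Λ J a) • (X J I * X K L)
        = (Λ a J * (eps (idx I a K L M) : ℝ)) • (X I J * X K L) := by
    intro I J K L a; rw [hΛ a J, hanti I J, neg_mul]; module
  have r3 : ∀ I J K L a : Fin (d + 4),
      ((eps (idx I J a L M) : ℝ) * Λ K a) • (X I J * X K L)
        = -((Λ a K * (eps (idx I J a L M) : ℝ)) • (X I J * X K L)) := by
    intro I J K L a; rw [hΛ a K]; module
  have r4 : ∀ I J K L a : Fin (d + 4),
      ((eps (idx I J K a M) : ℝ) * Λ L a) • (X I J * X L K)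
        = (Λ a L * (eps (idx I J K a M) : ℝ)) • (X I J * X K L) := by
    intro I J K L a; rw [hΛ a L, hanti K L, mul_neg (X I J) (X K L)]; module
  simp only [r1, r2, r3, r4]
  have hRHS : (∑ i : Fin d, ∑ a : Fin (d + 4), Λ a (M i) •
        ∑ I : Fin (d + 4), ∑ J : Fin (d + 4), ∑ K : Fin (d + 4), ∑ L : Fin (d + 4),
          (eps (idx I J K L (Function.update M i a)) : ℝ) • (X I J * X K L))
      = ∑ I : Fin (d + 4), ∑ J : Fin (d + 4), ∑ K : Fin (d + 4), ∑ L : Fin (d + 4),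
          (∑ i : Fin d, ∑ a : Fin (d + 4),
            Λ a (M i) * (eps (idx I J K L (Function.update M i a)) : ℝ)) • (X I J * X K L) :=
    calc (∑ i : Fin d, ∑ a : Fin (d + 4), Λ a (M i) •
        ∑ I : Fin (d + 4), ∑ J : Fin (d + 4), ∑ K : Fin (d + 4), ∑ L : Fin (d + 4),
          (eps (idx I J K L (Function.update M i a)) : ℝ) • (X I J * X K L))
        = ∑ i : Fin d, ∑ a : Fin (d + 4),
            ∑ I : Fin (d + 4), ∑ J : Fin (d + 4), ∑ K : Fin (d + 4), ∑ L : Fin (d + 4),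
            (Λ a (M i) * (eps (idx I J K L (Function.update M i a)) : ℝ)) • (X I J * X K L) := by
          refine Finset.sum_congr rfl fun i _ => Finset.sum_congr rfl fun a _ => ?_
          simp only [Finset.smul_sum, smul_smul]
      _ = ∑ i : Fin d,
            ∑ I : Fin (d + 4), ∑ J : Fin (d + 4), ∑ K : Fin (d + 4), ∑ L : Fin (d + 4),
            ∑ a : Fin (d + 4),
            (Λ a (M i) * (eps (idx I J K L (Function.update M i a)) : ℝ)) • (X I J * X K L) :=
          Finset.sum_congr rfl fun i _ => sum_push5 _
      _ = ∑ I : Fin (d + 4), ∑ J : Fin (d + 4), ∑ K : Fin (d + 4), ∑ L : Fin (d + 4),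
            ∑ i : Fin d, ∑ a : Fin (d + 4),
            (Λ a (M i) * (eps (idx I J K L (Function.update M i a)) : ℝ)) • (X I J * X K L) :=
          sum_push5 _
      _ = ∑ I : Fin (d + 4), ∑ J : Fin (d + 4), ∑ K : Fin (d + 4), ∑ L : Fin (d + 4),
          (∑ i : Fin d, ∑ a : Fin (d + 4),
            Λ a (M i) * (eps (idx I J K L (Function.update M i a)) : ℝ)) • (X I J * X K L) := by
          refine Finset.sum_congr rfl fun I _ => Finset.sum_congr rfl fun J _ =>
            Finset.sum_congr rfl fun K _ => Finset.sum_congr rfl fun L _ => ?_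
          simp only [← Finset.sum_smul]
  rw [hRHS]
  simp only [← neg_smul, ← Finset.sum_smul, Finset.sum_neg_distrib,
    ← Finset.sum_sub_distrib, ← Finset.sum_add_distrib]
  refine Finset.sum_congr rfl fun I _ => Finset.sum_congr rfl fun J _ =>
    Finset.sum_congr rfl fun K _ => Finset.sum_congr rfl fun L _ => ?_
  exact hPmerge _ _ _ _ _ _ (hg I J K L)
end
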